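/- arXiv:2003.12169 — 2 statements merged into one kernel-verified Lean document; each statement's English description precedes it below -/
import Mathlib

section
/- Let G be a finite simple graph on vertex set V, let d : V → C be a stable coloring of G, let c₀ : V → A be any initial coloring that factors through d (i.e., there exists h : C → A with c₀ = h ∘ d), and let f : ℕ → A → Multiset A → A be any sequence of update functions, with iterated message-passing colorings c_{t+1}(v) = f_t(c_t(v), M_{c_t}(v)). Then for every t ∈ ℕ and all vertices u, v ∈ V, d(u) = d(v) implies c_t(u) = c_t(v). (In other words, no iterated message-passing computation, and hence no WL-GNN, can distinguish two vertices identified by a stable coloring through which its input features factor.) -/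
/-!
A coloring that factors through a stable coloring `d` sees, at vertices with the same `d`-color,
the image of one and the same `d`-neighbor multiset, so every message-passing update preserves
the property of factoring through `d`; induction on `t` finishes the proof.
-/

/-- The multiset of `c`-values of the neighbors of `v` in `G`. -/
def nbrMultiset {V A : Type*} [Fintype V] (G : SimpleGraph V) [DecidableRel G.Adj]
    (c : V → A) (v : V) : Multiset A :=
  (G.neighborFinset v).val.map c

/-- Iterated message-passing colorings: `c_{t+1}(v) = f_t (c_t v) (M_{c_t} v)`. -/
def iterColor {V A : Type*} [Fintype V] (G : SimpleGraph V) [DecidableRel G.Adj]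
    (c₀ : V → A) (f : ℕ → A → Multiset A → A) : ℕ → V → A
  | 0 => c₀
  | (t + 1) => fun v =>
      f t (iterColor G c₀ f t v) (nbrMultiset G (iterColor G c₀ f t) v)

open Function

section MessagePassing

variable {V C A : Type*} [Fintype V] (G : SimpleGraph V) [DecidableRel G.Adj]

def IsStableColoring (d : V → C) : Prop :=
  ∀ u v : V, d u = d v → nbrMultiset G d u = nbrMultiset G d v

theorem nbrMultiset_comp (g : C → A) (d : V → C) (v : V) :
    nbrMultiset G (g ∘ d) v = (nbrMultiset G d v).map g :=
  (Multiset.map_map g d _).symm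

theorem nbrMultiset_eq_of_factorsThrough {d : V → C}
    (hstable : IsStableColoring G d) {c : V → A} (hc : c.FactorsThrough d) {u v : V}
    (huv : d u = d v) :
    nbrMultiset G c u = nbrMultiset G c v := by
  rw [← hc.extend_comp (fun _ => c u), nbrMultiset_comp, nbrMultiset_comp, hstable u v huv]

theorem iterColor_factorsThrough {d : V → C}
    (hstable : IsStableColoring G d) {c₀ : V → A} (hc₀ : c₀.FactorsThrough d)
    (f : ℕ → A → Multiset A → A) (t : ℕ) :
    (iterColor G c₀ f t).FactorsThrough d := by
  induction t with
  | zero => exact hc₀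
  | succ t ih =>
    intro u v huv
    change f t _ _ = f t _ _
    rw [ih huv, nbrMultiset_eq_of_factorsThrough G hstable ih huv]

end MessagePassing

/-- No iterated message-passing computation can distinguish two vertices identified by a
stable coloring through which its input features factor. -/
theorem stmt0 {V C A : Type*} [Fintype V] (G : SimpleGraph V) [DecidableRel G.Adj]
    (d : V → C)
    (hstable : ∀ u v : V, d u = d v → nbrMultiset G d u = nbrMultiset G d v)
    (c₀ : V → A) (hfac : ∃ h : C → A, c₀ = h ∘ d)
    (f : ℕ → A → Multiset A → A) :
    ∀ (t : ℕ) (u v : V), d u = d v → iterColor G c₀ f t u = iterColor G c₀ f t v := by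
  obtain ⟨h, rfl⟩ := hfac
  intro t u v huv
  exact iterColor_factorsThrough G hstable (FactorsThrough.rfl.comp_left h) f t huv
end

section
/- Let G₁ and G₂ be finite simple graphs on vertex sets V₁ and V₂ with initial colorings x₁ : V₁ → A and x₂ : V₂ → A, let f : ℕ → A → Multiset A → A be a shared sequence of update functions with iterated message-passing colorings c_t^{G₁} and c_t^{G₂}, and fix t ∈ ℕ, v₁ ∈ V₁, v₂ ∈ V₂. Suppose φ is a bijection from the closed t-ball B_t(v₁) in G₁ onto the closed t-ball B_t(v₂) in G₂ such that φ(v₁) = v₂, x₂(φ(u)) = x₁(u) for all u ∈ B_t(v₁), and for all u, w ∈ B_t(v₁), u is adjacent to w in G₁ if and only if φ(u) is adjacent to φ(w) in G₂. Then c_t^{G₁}(v₁) = c_t^{G₂}(v₂). (A t-layer message-passing representation of a node is determined by the isomorphism type of its t-hop egonet with its features.) -/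
/-- The closed `t`-ball around `v` in `G`: vertices reachable from `v` by a walk of
length at most `t`. -/
def ball {V : Type*} (G : SimpleGraph V) (v : V) (t : ℕ) : Set V :=
  {u | ∃ w : G.Walk v u, w.length ≤ t}

section Ball

variable {V : Type*} (G : SimpleGraph V)

theorem self_mem_ball (v : V) (t : ℕ) : v ∈ ball G v t :=
  ⟨.nil, Nat.zero_le t⟩

variable {G}

theorem ball_mono {v : V} {s t : ℕ} (hst : s ≤ t) : ball G v s ⊆ ball G v t :=
  fun _ ⟨p, hp⟩ ↦ ⟨p, hp.trans hst⟩

theorem ball_subset_ball_succ_of_adj {u w : V} (huw : G.Adj u w) (t : ℕ) :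
    ball G w t ⊆ ball G u (t + 1) :=
  fun _ ⟨p, hp⟩ ↦ ⟨.cons huw p, by simpa using hp⟩

theorem mem_ball_succ_of_adj {u w : V} (huw : G.Adj u w) (t : ℕ) : w ∈ ball G u (t + 1) :=
  ball_subset_ball_succ_of_adj huw t (self_mem_ball G w t)

end Ball

section InducedIso

variable {V₁ V₂ A : Type*} [Fintype V₁] [Fintype V₂]
  {G₁ : SimpleGraph V₁} [DecidableRel G₁.Adj] {G₂ : SimpleGraph V₂} [DecidableRel G₂.Adj]
  {S₁ : Set V₁} {S₂ : Set V₂}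

theorem nbrMultiset_eq_of_iso_induce (e : G₁.induce S₁ ≃g G₂.induce S₂)
    {c₁ : V₁ → A} {c₂ : V₂ → A} (u : S₁)
    (hN₁ : ∀ w, G₁.Adj u w → w ∈ S₁) (hN₂ : ∀ w, G₂.Adj (e u) w → w ∈ S₂)
    (hc : ∀ w : S₁, G₁.Adj u w → c₂ (e w) = c₁ w) :
    nbrMultiset G₁ c₁ u = nbrMultiset G₂ c₂ (e u) := by
  refine Multiset.map_eq_map_of_bij_of_nodup c₁ c₂ (Finset.nodup _) (Finset.nodup _)
    (fun w hw ↦ e ⟨w, hN₁ w ((G₁.mem_neighborFinset u w).1 hw)⟩) ?_ ?_ ?_ ?_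
  · intro w hw
    exact (G₂.mem_neighborFinset _ _).2 (e.map_adj_iff.2 ((G₁.mem_neighborFinset u w).1 hw))
  · intro w₁ _ w₂ _ h
    exact congrArg Subtype.val (e.injective (Subtype.ext h))
  · intro w hw
    have hw' := (G₂.mem_neighborFinset _ _).1 hw
    obtain ⟨w', hw'e⟩ := e.surjective ⟨w, hN₂ w hw'⟩
    have hadj : G₁.Adj u w' := e.map_adj_iff.1 (hw'e ▸ hw')
    exact ⟨w', (G₁.mem_neighborFinset _ _).2 hadj, by simp [hw'e]⟩
  · intro w hw
    exact (hc ⟨w, _⟩ ((G₁.mem_neighborFinset u w).1 hw)).symm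

theorem iterColor_eq_of_iso_induce (e : G₁.induce S₁ ≃g G₂.induce S₂)
    {x₁ : V₁ → A} {x₂ : V₂ → A} (hx : ∀ u : S₁, x₂ (e u) = x₁ u)
    (f : ℕ → A → Multiset A → A) (s : ℕ) (u : S₁)
    (h₁ : ball G₁ u s ⊆ S₁) (h₂ : ball G₂ (e u) s ⊆ S₂) :
    iterColor G₁ x₁ f s u = iterColor G₂ x₂ f s (e u) := by
  induction s generalizing u with
  | zero => exact (hx u).symm
  | succ s ih =>
    have hu : iterColor G₁ x₁ f s u = iterColor G₂ x₂ f s (e u) :=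
      ih u ((ball_mono s.le_succ).trans h₁) ((ball_mono s.le_succ).trans h₂)
    have hN : nbrMultiset G₁ (iterColor G₁ x₁ f s) u
        = nbrMultiset G₂ (iterColor G₂ x₂ f s) (e u) := by
      refine nbrMultiset_eq_of_iso_induce e u (fun w hw ↦ h₁ (mem_ball_succ_of_adj hw s))
        (fun w hw ↦ h₂ (mem_ball_succ_of_adj hw s)) fun w hw ↦ (ih w ?_ ?_).symm
      · exact (ball_subset_ball_succ_of_adj hw s).trans h₁
      · have hew : G₂.Adj (e u : V₂) (e w) := e.map_adj_iff.2 hw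
        exact (ball_subset_ball_succ_of_adj hew s).trans h₂
    simp only [iterColor, hu, hN]

end InducedIso

/-- A `t`-layer message-passing representation of a node is determined by the isomorphism
type of its `t`-hop egonet together with its features. -/
theorem stmt7 {V₁ V₂ A : Type*} [Fintype V₁] [Fintype V₂]
    (G₁ : SimpleGraph V₁) [DecidableRel G₁.Adj]
    (G₂ : SimpleGraph V₂) [DecidableRel G₂.Adj]
    (x₁ : V₁ → A) (x₂ : V₂ → A) (f : ℕ → A → Multiset A → A)
    (t : ℕ) (v₁ : V₁) (v₂ : V₂)
    (φ : ball G₁ v₁ t → ball G₂ v₂ t)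
    (hbij : Function.Bijective φ)
    (hv : (φ ⟨v₁, ⟨SimpleGraph.Walk.nil, Nat.zero_le t⟩⟩ : V₂) = v₂)
    (hx : ∀ u : ball G₁ v₁ t, x₂ (φ u : V₂) = x₁ (u : V₁))
    (hadj : ∀ u w : ball G₁ v₁ t,
      G₁.Adj (u : V₁) (w : V₁) ↔ G₂.Adj (φ u : V₂) (φ w : V₂)) :
    iterColor G₁ x₁ f t v₁ = iterColor G₂ x₂ f t v₂ := by
  let e : G₁.induce (ball G₁ v₁ t) ≃g G₂.induce (ball G₂ v₂ t) :=
    ⟨Equiv.ofBijective φ hbij, fun {u w} ↦ (hadj u w).symm⟩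
  have he : (e ⟨v₁, self_mem_ball G₁ v₁ t⟩ : V₂) = v₂ := hv
  rw [← he]
  exact iterColor_eq_of_iso_induce e hx f t _ subset_rfl (by rw [he])
end
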